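/- arXiv:1206.3916 — 6 statements merged into one kernel-verified Lean document; each statement's English description precedes it below -/
import Mathlib

section
/- Let S be a set and ◁ a binary operation on S. Define σ : S × S → S × S by σ(a,b) = (b, a◁b). Then σ is a bijection of S × S satisfying the set-theoretic Yang–Baxter equation if and only if (S,◁) is a rack, i.e. ◁ is self-distributive ((a◁b)◁c = (a◁c)◁(b◁c) for all a,b,c) and for every b ∈ S the right translation a ↦ a◁b is a bijection of S. -/
/-!
Both sides of the braid relation send `(a, b, c)` to `(c, b ◁ c, _)`, with last entries
`(a ◁ b) ◁ c` and `(a ◁ c) ◁ (b ◁ c)`; so the Yang–Baxter equation is exactly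
self-distributivity. The map `(a, b) ↦ (b, a ◁ b)` preserves the fibres over the
second coordinate of the source and the first of the target, where it restricts to
the right translation by `b`; hence it is bijective iff every right translation is.
-/

theorem bijective_prod_swap_op_iff {α β γ : Type*} (op : α → β → γ) :
    Function.Bijective (fun p : α × β => (p.2, op p.1 p.2)) ↔
      ∀ b, Function.Bijective (fun a => op a b) := by
  constructor
  · rintro ⟨hinj, hsurj⟩ b
    refine ⟨fun a a' h => ?_, fun y => ?_⟩
    · have hpair : ((a, b) : α × β) = (a', b) := hinj (by simp only [h])
      exact (Prod.mk.inj hpair).1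
    · obtain ⟨⟨a, b'⟩, h⟩ := hsurj (b, y)
      obtain ⟨rfl, hy⟩ := Prod.mk.inj h
      exact ⟨a, hy⟩
  · intro hb
    refine ⟨fun ⟨a, b⟩ ⟨a', b'⟩ h => ?_, fun ⟨b, y⟩ => ?_⟩
    · obtain ⟨rfl, h⟩ := Prod.mk.inj h
      exact Prod.ext ((hb b).1 h) rfl
    · obtain ⟨a, ha⟩ := (hb b).2 y
      exact ⟨(a, b), by simp only [ha]⟩

theorem yangBaxter_prod_swap_op_iff {S : Type*} (op : S → S → S) :
    let σ₁ : S × S × S → S × S × S := fun p => (p.2.1, op p.1 p.2.1, p.2.2)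
    let σ₂ : S × S × S → S × S × S := fun p => (p.1, p.2.2, op p.2.1 p.2.2)
    σ₁ ∘ σ₂ ∘ σ₁ = σ₂ ∘ σ₁ ∘ σ₂ ↔ ∀ a b c, op (op a b) c = op (op a c) (op b c) := by
  intro σ₁ σ₂
  constructor
  · intro h a b c
    exact congrArg (fun p : S × S × S => p.2.2) (congrFun h (a, b, c))
  · intro h
    funext ⟨a, b, c⟩
    exact Prod.ext rfl (Prod.ext rfl (h a b c))

/-- For `σ (a,b) = (b, a ◁ b)` on `S × S`, `σ` is a bijection of `S × S`
satisfying the set-theoretic Yang–Baxter equation iff `(S, ◁)` is a rack, i.e. `◁` is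
self-distributive and every right translation `a ↦ a ◁ b` is a bijection of `S`. -/
theorem stmt1 {S : Type*} (op : S → S → S) :
    (let σ : S × S → S × S := fun p => (p.2, op p.1 p.2)
     let σ₁ : S × S × S → S × S × S := fun p => ((σ (p.1, p.2.1)).1, (σ (p.1, p.2.1)).2, p.2.2)
     let σ₂ : S × S × S → S × S × S := fun p => (p.1, σ p.2)
     Function.Bijective σ ∧ σ₁ ∘ σ₂ ∘ σ₁ = σ₂ ∘ σ₁ ∘ σ₂) ↔
    ((∀ a b c : S, op (op a b) c = op (op a c) (op b c)) ∧
      ∀ b : S, Function.Bijective (fun a => op a b)) :=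
  (and_congr (bijective_prod_swap_op_iff op) (yangBaxter_prod_swap_op_iff op)).trans and_comm
end

section
/- Let (S,◁,◁̃) be a rack and f : S → S a bijection with f(a◁b) = f(a)◁f(b) for all a,b ∈ S (a virtual rack), and let n ≥ 2. Define for 1 ≤ i ≤ n−1 the bijections of S^n: T_i(a_1,…,a_n) = (a_1,…,a_{i−1}, a_{i+1}, a_i◁a_{i+1}, a_{i+2},…,a_n) and Z_i^f(a_1,…,a_n) = (a_1,…,a_{i−1}, f^{−1}(a_{i+1}), f(a_i), a_{i+2},…,a_n). Then the assignments σ_i ↦ T_i and ζ_i ↦ Z_i^f define a group homomorphism from the virtual braid group VB_n to the group of permutations of S^n. -/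
/-!
Each generator acts on `S^n` through a bijection of `S × S` applied to two adjacent coordinates:
`(a, b) ↦ (b, a ◁ b)` for `σ_i`, inverted using `◁̃`, and the involution `(a, b) ↦ (f⁻¹ b, f a)`
for `ζ_i`. Maps on disjoint pairs of coordinates commute, which gives the far commutation
relations. The remaining relations involve three consecutive coordinates only, so they reduce to
identities on `S³`: the braid relation for `σ` is right self-distributivity, the braid relation for
`ζ` holds for any bijection `f`, and the mixed relation `ζ_i ζ_{i+1} σ_i = σ_{i+1} ζ_i ζ_{i+1}` is
exactly `f (a ◁ b) = f a ◁ f b`.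
-/

/-- `T_i(a) = (…, a_{i+1}, a_i ◁ a_{i+1}, …)` on `S^{m+1}`. -/
def braidMap {S : Type*} (op : S → S → S) {m : ℕ} (i : Fin m) (a : Fin (m + 1) → S) :
    Fin (m + 1) → S :=
  Function.update (Function.update a i.castSucc (a i.succ)) i.succ
    (op (a i.castSucc) (a i.succ))

/-- `Z_i^f(a) = (…, f⁻¹(a_{i+1}), f(a_i), …)` on `S^{m+1}`. -/
def vswapMap {S : Type*} (f : S ≃ S) {m : ℕ} (i : Fin m) (a : Fin (m + 1) → S) :
    Fin (m + 1) → S :=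
  Function.update (Function.update a i.castSucc (f.symm (a i.succ))) i.succ (f (a i.castSucc))

/-- The defining relations of the virtual braid group `VB_{m+1}` on generators
`σ_i = Sum.inl i` and `ζ_i = Sum.inr i`, `i : Fin m`. -/
def vbGroupRels (m : ℕ) : Set (FreeGroup (Fin m ⊕ Fin m)) :=
  let σ : Fin m → FreeGroup (Fin m ⊕ Fin m) := fun i => FreeGroup.of (Sum.inl i)
  let ζ : Fin m → FreeGroup (Fin m ⊕ Fin m) := fun i => FreeGroup.of (Sum.inr i)
  { r | (∃ i j : Fin m, (i : ℕ) + 2 ≤ (j : ℕ) ∧ r = σ i * σ j * (σ i)⁻¹ * (σ j)⁻¹) ∨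
        (∃ i j : Fin m, (i : ℕ) + 2 ≤ (j : ℕ) ∧ r = ζ i * ζ j * (ζ i)⁻¹ * (ζ j)⁻¹) ∨
        (∃ i j : Fin m, ((i : ℕ) + 2 ≤ (j : ℕ) ∨ (j : ℕ) + 2 ≤ (i : ℕ)) ∧
          r = σ i * ζ j * (σ i)⁻¹ * (ζ j)⁻¹) ∨
        (∃ i j : Fin m, (i : ℕ) + 1 = (j : ℕ) ∧ r = σ i * σ j * σ i * (σ j * σ i * σ j)⁻¹) ∨
        (∃ i j : Fin m, (i : ℕ) + 1 = (j : ℕ) ∧ r = ζ i * ζ j * ζ i * (ζ j * ζ i * ζ j)⁻¹) ∨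
        (∃ i j : Fin m, (i : ℕ) + 1 = (j : ℕ) ∧ r = ζ i * ζ j * σ i * (σ j * ζ i * ζ j)⁻¹) ∨
        (∃ i : Fin m, r = ζ i * ζ i) }

section

variable {S : Type*} {m : ℕ}

def pairMap (g : S × S → S × S) (i : Fin m) (a : Fin (m + 1) → S) : Fin (m + 1) → S :=
  Function.update (Function.update a i.castSucc (g (a i.castSucc, a i.succ)).1) i.succ
    (g (a i.castSucc, a i.succ)).2

section pairMap

variable (g h : S × S → S × S) (i : Fin m) (a : Fin (m + 1) → S)

@[simp]
theorem pairMap_apply_castSucc : pairMap g i a i.castSucc = (g (a i.castSucc, a i.succ)).1 := by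
  simp [pairMap, Function.update_of_ne Fin.castSucc_lt_succ.ne]

@[simp]
theorem pairMap_apply_succ : pairMap g i a i.succ = (g (a i.castSucc, a i.succ)).2 := by
  simp [pairMap]

theorem pairMap_apply_of_ne {k : Fin (m + 1)} (h₁ : k ≠ i.castSucc) (h₂ : k ≠ i.succ) :
    pairMap g i a k = a k := by
  simp [pairMap, Function.update_of_ne, h₁, h₂]

theorem pairMap_id : pairMap id i a = a := by
  simp [pairMap]

theorem pairMap_pairMap : pairMap g i (pairMap h i a) = pairMap (g ∘ h) i a := by
  funext k
  by_cases h₁ : k = i.castSucc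
  · subst h₁; simp
  by_cases h₂ : k = i.succ
  · subst h₂; simp
  simp [pairMap_apply_of_ne, h₁, h₂]

end pairMap

theorem pairMap_comm (g h : S × S → S × S) {i j : Fin m}
    (hij : (i : ℕ) + 2 ≤ j ∨ (j : ℕ) + 2 ≤ i) (a : Fin (m + 1) → S) :
    pairMap g i (pairMap h j a) = pairMap h j (pairMap g i a) := by
  have hne : ∀ {k l : Fin m}, (k : ℕ) + 2 ≤ l ∨ (l : ℕ) + 2 ≤ k →
      l.castSucc ≠ k.castSucc ∧ l.castSucc ≠ k.succ ∧ l.succ ≠ k.castSucc ∧ l.succ ≠ k.succ := by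
    intro k l h
    simp only [ne_eq, Fin.ext_iff, Fin.val_castSucc, Fin.val_succ]
    omega
  obtain ⟨h₁, h₂, h₃, h₄⟩ := hne hij
  obtain ⟨h₅, h₆, h₇, h₈⟩ := hne hij.symm
  funext k
  by_cases hi : k = i.castSucc ∨ k = i.succ
  · rcases hi with rfl | rfl <;> simp [pairMap_apply_of_ne, *]
  by_cases hj : k = j.castSucc ∨ k = j.succ
  · rcases hj with rfl | rfl <;> simp [pairMap_apply_of_ne, *]
  simp only [not_or] at hi hj
  simp [pairMap_apply_of_ne, *]

theorem pairMap_comp {n : ℕ} {e : Fin (n + 1) → Fin (m + 1)} (he : e.Injective) (g : S × S → S × S)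
    {i' : Fin n} {i : Fin m} (h₁ : e i'.castSucc = i.castSucc) (h₂ : e i'.succ = i.succ)
    (a : Fin (m + 1) → S) : pairMap g i a ∘ e = pairMap g i' (a ∘ e) := by
  funext t
  by_cases ht₁ : t = i'.castSucc
  · subst ht₁; simp [h₁, h₂]
  by_cases ht₂ : t = i'.succ
  · subst ht₂; simp [h₁, h₂]
  rw [Function.comp_apply, pairMap_apply_of_ne _ _ _ (h₁ ▸ he.ne ht₁) (h₂ ▸ he.ne ht₂),
    pairMap_apply_of_ne _ _ _ ht₁ ht₂]
  rfl

/-- Restricting along `t ↦ i + t` turns maps on the pairs `i` and `i + 1` into maps on the pairs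
`0` and `1` of three coordinates, and every other coordinate is left untouched. -/
theorem pairMap_adjacent {i j : Fin m} (hij : (i : ℕ) + 1 = j) {g h k g' h' k' : S × S → S × S}
    (h₃ : ∀ b : Fin 3 → S,
      pairMap g 0 (pairMap h 1 (pairMap k 0 b)) = pairMap g' 1 (pairMap h' 0 (pairMap k' 1 b)))
    (a : Fin (m + 1) → S) :
    pairMap g i (pairMap h j (pairMap k i a)) = pairMap g' j (pairMap h' i (pairMap k' j a)) := by
  let e : Fin 3 → Fin (m + 1) := fun t => ⟨i + t, by omega⟩
  have he : e.Injective := fun s t hst => by simpa [e, Fin.ext_iff] using hst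
  have hi (g : S × S → S × S) (b : Fin (m + 1) → S) : pairMap g i b ∘ e = pairMap g 0 (b ∘ e) :=
    pairMap_comp he g (i' := 0) (Fin.ext (by simp [e])) (Fin.ext (by simp [e])) b
  have hj (g : S × S → S × S) (b : Fin (m + 1) → S) : pairMap g j b ∘ e = pairMap g 1 (b ∘ e) :=
    pairMap_comp he g (i' := 1) (Fin.ext (by simp [e]; omega)) (Fin.ext (by simp [e]; omega)) b
  funext p
  by_cases hp : ∃ t, e t = p
  · obtain ⟨t, rfl⟩ := hp
    have := congrFun (h₃ (a ∘ e)) t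
    simp only [← hi, ← hj] at this
    exact this
  · have hout (t : Fin 3) : (i : ℕ) + t ≠ p := fun h => hp ⟨t, Fin.ext h⟩
    have h₀ := hout 0
    have h₁ := hout 1
    have h₂ := hout 2
    simp only [Fin.val_zero, Fin.val_one, Fin.val_two] at h₀ h₁ h₂
    have hpi : p ≠ i.castSucc ∧ p ≠ i.succ := by
      simp only [ne_eq, Fin.ext_iff, Fin.val_castSucc, Fin.val_succ]; omega
    have hpj : p ≠ j.castSucc ∧ p ≠ j.succ := by
      simp only [ne_eq, Fin.ext_iff, Fin.val_castSucc, Fin.val_succ]; omega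
    simp only [pairMap_apply_of_ne _ _ _ hpi.1 hpi.2, pairMap_apply_of_ne _ _ _ hpj.1 hpj.2]

def pairPerm (i : Fin m) : Equiv.Perm (S × S) →* Equiv.Perm (Fin (m + 1) → S) where
  toFun g :=
    { toFun := pairMap g i
      invFun := pairMap g.symm i
      left_inv a := by rw [pairMap_pairMap, Equiv.symm_comp_self, pairMap_id]
      right_inv a := by rw [pairMap_pairMap, Equiv.self_comp_symm, pairMap_id] }
  map_one' := Equiv.ext (pairMap_id i)
  map_mul' g h := Equiv.ext fun a => (pairMap_pairMap g h i a).symm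

@[simp]
theorem coe_pairPerm (i : Fin m) (g : Equiv.Perm (S × S)) : ⇑(pairPerm i g) = pairMap g i := rfl

theorem pairPerm_commute {i j : Fin m} (hij : (i : ℕ) + 2 ≤ j ∨ (j : ℕ) + 2 ≤ i)
    (g h : Equiv.Perm (S × S)) : Commute (pairPerm i g) (pairPerm j h) :=
  Equiv.ext fun a => pairMap_comm g h hij a

theorem pairPerm_adjacent {i j : Fin m} (hij : (i : ℕ) + 1 = j) {g h k g' h' k' : Equiv.Perm (S × S)}
    (h₃ : pairPerm (0 : Fin 2) g * pairPerm 1 h * pairPerm 0 k =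
      pairPerm 1 g' * pairPerm 0 h' * pairPerm 1 k') :
    pairPerm i g * pairPerm j h * pairPerm i k = pairPerm j g' * pairPerm i h' * pairPerm j k' :=
  Equiv.ext (pairMap_adjacent hij fun b => Equiv.ext_iff.mp h₃ b)

def rackBraid (op inv : S → S → S) (h₁ : ∀ a b : S, inv (op a b) b = a)
    (h₂ : ∀ a b : S, op (inv a b) b = a) : Equiv.Perm (S × S) where
  toFun p := (p.2, op p.1 p.2)
  invFun p := (inv p.2 p.1, p.1)
  left_inv p := by simp [h₁]
  right_inv p := by simp [h₂]

def virtualSwap (f : S ≃ S) : Equiv.Perm (S × S) where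
  toFun p := (f.symm p.2, f p.1)
  invFun p := (f.symm p.2, f p.1)
  left_inv p := by simp
  right_inv p := by simp

theorem virtualSwap_mul_self (f : S ≃ S) : virtualSwap f * virtualSwap f = 1 :=
  Equiv.ext fun p => by simp [virtualSwap]

section ThreeStrands

variable (op inv : S → S → S) (h₁ : ∀ a b : S, inv (op a b) b = a)
    (h₂ : ∀ a b : S, op (inv a b) b = a) (f : S ≃ S)

theorem rackBraid_braid_relation (hsd : ∀ a b c : S, op (op a b) c = op (op a c) (op b c)) :
    pairPerm (0 : Fin 2) (rackBraid op inv h₁ h₂) * pairPerm 1 (rackBraid op inv h₁ h₂) *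
      pairPerm 0 (rackBraid op inv h₁ h₂) =
    pairPerm 1 (rackBraid op inv h₁ h₂) * pairPerm 0 (rackBraid op inv h₁ h₂) *
      pairPerm 1 (rackBraid op inv h₁ h₂) := by
  ext a t
  fin_cases t <;> simp [pairMap, rackBraid]
  exact hsd _ _ _

theorem virtualSwap_braid_relation :
    pairPerm (0 : Fin 2) (virtualSwap f) * pairPerm 1 (virtualSwap f) * pairPerm 0 (virtualSwap f) =
    pairPerm 1 (virtualSwap f) * pairPerm 0 (virtualSwap f) * pairPerm 1 (virtualSwap f) := by
  ext a t
  fin_cases t <;> simp [pairMap, virtualSwap]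

theorem virtualSwap_mixed_relation (hf : ∀ a b : S, f (op a b) = op (f a) (f b)) :
    pairPerm (0 : Fin 2) (virtualSwap f) * pairPerm 1 (virtualSwap f) *
      pairPerm 0 (rackBraid op inv h₁ h₂) =
    pairPerm 1 (rackBraid op inv h₁ h₂) * pairPerm 0 (virtualSwap f) *
      pairPerm 1 (virtualSwap f) := by
  ext a t
  fin_cases t <;> simp [pairMap, rackBraid, virtualSwap, hf]

end ThreeStrands

theorem lift_eq_one_of_mem_vbGroupRels {G : Type*} [Group G] (σ ζ : Fin m → G)
    (hσσ : ∀ i j : Fin m, (i : ℕ) + 2 ≤ j → Commute (σ i) (σ j))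
    (hζζ : ∀ i j : Fin m, (i : ℕ) + 2 ≤ j → Commute (ζ i) (ζ j))
    (hσζ : ∀ i j : Fin m, (i : ℕ) + 2 ≤ j ∨ (j : ℕ) + 2 ≤ i → Commute (σ i) (ζ j))
    (hσσσ : ∀ i j : Fin m, (i : ℕ) + 1 = j → σ i * σ j * σ i = σ j * σ i * σ j)
    (hζζζ : ∀ i j : Fin m, (i : ℕ) + 1 = j → ζ i * ζ j * ζ i = ζ j * ζ i * ζ j)
    (hζζσ : ∀ i j : Fin m, (i : ℕ) + 1 = j → ζ i * ζ j * σ i = σ j * ζ i * ζ j)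
    (hζ : ∀ i : Fin m, ζ i * ζ i = 1) :
    ∀ r ∈ vbGroupRels m, FreeGroup.lift (Sum.elim σ ζ) r = 1 := by
  rintro r (⟨i, j, hij, rfl⟩ | ⟨i, j, hij, rfl⟩ | ⟨i, j, hij, rfl⟩ | ⟨i, j, hij, rfl⟩ |
    ⟨i, j, hij, rfl⟩ | ⟨i, j, hij, rfl⟩ | ⟨i, rfl⟩) <;>
  simp only [map_mul, map_inv, FreeGroup.lift_apply_of, Sum.elim_inl, Sum.elim_inr]
  exacts [commutatorElement_eq_one_iff_mul_comm.mpr (hσσ i j hij),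
    commutatorElement_eq_one_iff_mul_comm.mpr (hζζ i j hij),
    commutatorElement_eq_one_iff_mul_comm.mpr (hσζ i j hij), mul_inv_eq_one.mpr (hσσσ i j hij),
    mul_inv_eq_one.mpr (hζζζ i j hij), mul_inv_eq_one.mpr (hζζσ i j hij), hζ i]

end

theorem stmt5_general {S : Type*} (op inv : S → S → S)
    (hsd : ∀ a b c : S, op (op a b) c = op (op a c) (op b c))
    (hinv : ∀ a b : S, inv (op a b) b = a ∧ op (inv a b) b = a)
    (f : S ≃ S) (hf : ∀ a b : S, f (op a b) = op (f a) (f b))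
    {m : ℕ} :
    ∃ ρ : PresentedGroup (vbGroupRels m) →* Equiv.Perm (Fin (m + 1) → S),
      ∀ i : Fin m,
        ⇑(ρ (PresentedGroup.of (rels := vbGroupRels m) (Sum.inl i))) = braidMap op i ∧
        ⇑(ρ (PresentedGroup.of (rels := vbGroupRels m) (Sum.inr i))) = vswapMap f i := by
  set B := rackBraid op inv (fun a b => (hinv a b).1) (fun a b => (hinv a b).2)
  have hrels := lift_eq_one_of_mem_vbGroupRels (m := m)
    (fun i => pairPerm i B) (fun i => pairPerm i (virtualSwap f))
    (fun _ _ h => pairPerm_commute (Or.inl h) _ _) (fun _ _ h => pairPerm_commute (Or.inl h) _ _)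
    (fun _ _ h => pairPerm_commute h _ _)
    (fun _ _ h => pairPerm_adjacent h (rackBraid_braid_relation op inv _ _ hsd))
    (fun _ _ h => pairPerm_adjacent h (virtualSwap_braid_relation f))
    (fun _ _ h => pairPerm_adjacent h (virtualSwap_mixed_relation op inv _ _ f hf))
    (fun i => by rw [← map_mul, virtualSwap_mul_self, map_one])
  exact ⟨PresentedGroup.toGroup hrels, fun i => ⟨rfl, rfl⟩⟩

/-- For a virtual rack `(S, ◁, ◁̃, f)` and `n = m+1 ≥ 2` strands,
`σ_i ↦ T_i`, `ζ_i ↦ Z_i^f` defines a group homomorphism `VB_n → Perm(S^n)`. -/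
theorem stmt5 {S : Type*} (op inv : S → S → S)
    (hsd : ∀ a b c : S, op (op a b) c = op (op a c) (op b c))
    (hinv : ∀ a b : S, inv (op a b) b = a ∧ op (inv a b) b = a)
    (f : S ≃ S) (hf : ∀ a b : S, f (op a b) = op (f a) (f b))
    {m : ℕ} (hm : 1 ≤ m) :
    ∃ ρ : PresentedGroup (vbGroupRels m) →* Equiv.Perm (Fin (m + 1) → S),
      ∀ i : Fin m,
        ⇑(ρ (PresentedGroup.of (rels := vbGroupRels m) (Sum.inl i))) = braidMap op i ∧
        ⇑(ρ (PresentedGroup.of (rels := vbGroupRels m) (Sum.inr i))) = vswapMap f i :=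
  stmt5_general op inv hsd hinv f hf
end

section
/- Let (S,◁) be a shelf and f : S → S a bijection with f(a◁b) = f(a)◁f(b) for all a,b ∈ S (a virtual shelf), and let n ≥ 2. Define for 1 ≤ i ≤ n−1 the maps T_i(a_1,…,a_n) = (a_1,…,a_{i−1}, a_{i+1}, a_i◁a_{i+1}, a_{i+2},…,a_n) and Z_i^f(a_1,…,a_n) = (a_1,…,a_{i−1}, f^{−1}(a_{i+1}), f(a_i), a_{i+2},…,a_n) on S^n. Then the assignments σ_i ↦ T_i and ζ_i ↦ Z_i^f define a monoid homomorphism from the positive virtual braid monoid VB_n^+ to the monoid of self-maps of S^n under composition. -/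
/-- The defining relations of the positive virtual braid monoid `VB_{m+1}^+` on
generators `σ_i = Sum.inl i` and `ζ_i = Sum.inr i`, `i : Fin m`. -/
def vbMonoidRels (m : ℕ) :
    FreeMonoid (Fin m ⊕ Fin m) → FreeMonoid (Fin m ⊕ Fin m) → Prop :=
  let σ : Fin m → FreeMonoid (Fin m ⊕ Fin m) := fun i => FreeMonoid.of (Sum.inl i)
  let ζ : Fin m → FreeMonoid (Fin m ⊕ Fin m) := fun i => FreeMonoid.of (Sum.inr i)
  fun a b =>
    (∃ i j : Fin m, (i : ℕ) + 2 ≤ (j : ℕ) ∧ a = σ i * σ j ∧ b = σ j * σ i) ∨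
    (∃ i j : Fin m, (i : ℕ) + 2 ≤ (j : ℕ) ∧ a = ζ i * ζ j ∧ b = ζ j * ζ i) ∨
    (∃ i j : Fin m, ((i : ℕ) + 2 ≤ (j : ℕ) ∨ (j : ℕ) + 2 ≤ (i : ℕ)) ∧
      a = σ i * ζ j ∧ b = ζ j * σ i) ∨
    (∃ i j : Fin m, (i : ℕ) + 1 = (j : ℕ) ∧ a = σ i * σ j * σ i ∧ b = σ j * σ i * σ j) ∨
    (∃ i j : Fin m, (i : ℕ) + 1 = (j : ℕ) ∧ a = ζ i * ζ j * ζ i ∧ b = ζ j * ζ i * ζ j) ∨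
    (∃ i j : Fin m, (i : ℕ) + 1 = (j : ℕ) ∧ a = ζ i * ζ j * σ i ∧ b = σ j * ζ i * ζ j) ∨
    (∃ i : Fin m, a = ζ i * ζ i ∧ b = 1)

/-! Both `T_i` and `Z_i^f` only touch the coordinates `i, i+1`, so relations between far-apart
generators hold coordinatewise, and each remaining relation is checked on three consecutive
coordinates. On `(a, b, c)` both sides of `σ_1σ_2σ_1 = σ_2σ_1σ_2` give `(c, b ◁ c, _)`, with last
entry `(a ◁ b) ◁ c` resp. `(a ◁ c) ◁ (b ◁ c)`: this is right self-distributivity. The mixed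
relation needs `f` to be a shelf morphism, and `ζ_i² = 1` holds because `f⁻¹ ∘ f = id`. -/

section VirtualShelf

variable {S : Type*} {m : ℕ}

theorem braidMap_apply (op : S → S → S) (i : Fin m) (a : Fin (m + 1) → S) (k : Fin (m + 1)) :
    braidMap op i a k =
      if (k : ℕ) = i + 1 then op (a ⟨i, by omega⟩) (a ⟨i + 1, by omega⟩)
      else if (k : ℕ) = i then a ⟨i + 1, by omega⟩
      else a k := by
  simp only [braidMap, Function.update_apply, Fin.ext_iff, Fin.val_succ, Fin.val_castSucc]
  rfl

theorem vswapMap_apply (f : S ≃ S) (i : Fin m) (a : Fin (m + 1) → S) (k : Fin (m + 1)) :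
    vswapMap f i a k =
      if (k : ℕ) = i + 1 then f (a ⟨i, by omega⟩)
      else if (k : ℕ) = i then f.symm (a ⟨i + 1, by omega⟩)
      else a k := by
  simp only [vswapMap, Function.update_apply, Fin.ext_iff, Fin.val_succ, Fin.val_castSucc]
  rfl

theorem braidMap_comm (op : S → S → S) {i j : Fin m} (h : (i : ℕ) + 2 ≤ j) :
    braidMap op i ∘ braidMap op j = braidMap op j ∘ braidMap op i := by
  funext a k
  simp only [Function.comp_apply, braidMap_apply]
  split_ifs <;> grind [Fin.ext_iff]

theorem vswapMap_comm (f : S ≃ S) {i j : Fin m} (h : (i : ℕ) + 2 ≤ j) :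
    vswapMap f i ∘ vswapMap f j = vswapMap f j ∘ vswapMap f i := by
  funext a k
  simp only [Function.comp_apply, vswapMap_apply]
  split_ifs <;> grind [Fin.ext_iff]

theorem braidMap_vswapMap_comm (op : S → S → S) (f : S ≃ S) {i j : Fin m}
    (h : (i : ℕ) + 2 ≤ j ∨ (j : ℕ) + 2 ≤ i) :
    braidMap op i ∘ vswapMap f j = vswapMap f j ∘ braidMap op i := by
  funext a k
  simp only [Function.comp_apply, braidMap_apply, vswapMap_apply]
  split_ifs <;> grind [Fin.ext_iff]

theorem braidMap_braid (op : S → S → S)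
    (hsd : ∀ a b c : S, op (op a b) c = op (op a c) (op b c)) {i j : Fin m} (h : (i : ℕ) + 1 = j) :
    braidMap op i ∘ braidMap op j ∘ braidMap op i = braidMap op j ∘ braidMap op i ∘ braidMap op j := by
  funext a k
  simp only [Function.comp_apply, braidMap_apply, ← h]
  split_ifs <;> grind [Fin.ext_iff]

theorem vswapMap_braid (f : S ≃ S) {i j : Fin m} (h : (i : ℕ) + 1 = j) :
    vswapMap f i ∘ vswapMap f j ∘ vswapMap f i = vswapMap f j ∘ vswapMap f i ∘ vswapMap f j := by
  funext a k
  simp only [Function.comp_apply, vswapMap_apply, ← h]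
  split_ifs <;> grind [Fin.ext_iff]

theorem vswapMap_vswapMap_braidMap (op : S → S → S) (f : S ≃ S)
    (hf : ∀ a b : S, f (op a b) = op (f a) (f b)) {i j : Fin m} (h : (i : ℕ) + 1 = j) :
    vswapMap f i ∘ vswapMap f j ∘ braidMap op i = braidMap op j ∘ vswapMap f i ∘ vswapMap f j := by
  funext a k
  simp only [Function.comp_apply, braidMap_apply, vswapMap_apply, ← h]
  split_ifs <;> grind [Fin.ext_iff]

theorem vswapMap_involutive (f : S ≃ S) (i : Fin m) : Function.Involutive (vswapMap f i) := by
  intro a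
  funext k
  simp only [vswapMap_apply]
  split_ifs <;> grind [Fin.ext_iff]

def vbGeneratorMap (op : S → S → S) (f : S ≃ S) :
    Fin m ⊕ Fin m → Function.End (Fin (m + 1) → S) :=
  Sum.elim (braidMap op) (vswapMap f)

theorem lift_eq_of_vbMonoidRels (op : S → S → S)
    (hsd : ∀ a b c : S, op (op a b) c = op (op a c) (op b c))
    (f : S ≃ S) (hf : ∀ a b : S, f (op a b) = op (f a) (f b))
    {x y : FreeMonoid (Fin m ⊕ Fin m)} (hxy : vbMonoidRels m x y) :
    FreeMonoid.lift (vbGeneratorMap op f) x = FreeMonoid.lift (vbGeneratorMap op f) y := by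
  rcases hxy with ⟨i, j, h, rfl, rfl⟩ | ⟨i, j, h, rfl, rfl⟩ | ⟨i, j, h, rfl, rfl⟩ |
    ⟨i, j, h, rfl, rfl⟩ | ⟨i, j, h, rfl, rfl⟩ | ⟨i, j, h, rfl, rfl⟩ | ⟨i, rfl, rfl⟩ <;>
    simp only [map_mul, map_one, FreeMonoid.lift_eval_of, vbGeneratorMap, Sum.elim_inl,
      Sum.elim_inr]
  · exact braidMap_comm op h
  · exact vswapMap_comm f h
  · exact braidMap_vswapMap_comm op f h
  · exact braidMap_braid op hsd h
  · exact vswapMap_braid f h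
  · exact vswapMap_vswapMap_braidMap op f hf h
  · exact (vswapMap_involutive f i).comp_self

end VirtualShelf

theorem stmt6_general {S : Type*} (op : S → S → S)
    (hsd : ∀ a b c : S, op (op a b) c = op (op a c) (op b c))
    (f : S ≃ S) (hf : ∀ a b : S, f (op a b) = op (f a) (f b))
    {m : ℕ} :
    ∃ ρ : PresentedMonoid (vbMonoidRels m) →* Function.End (Fin (m + 1) → S),
      ∀ i : Fin m,
        ρ (PresentedMonoid.of (vbMonoidRels m) (Sum.inl i)) = braidMap op i ∧
        ρ (PresentedMonoid.of (vbMonoidRels m) (Sum.inr i)) = vswapMap f i :=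
  ⟨PresentedMonoid.lift (vbGeneratorMap op f) fun _ _ => lift_eq_of_vbMonoidRels op hsd f hf,
    fun _ => ⟨rfl, rfl⟩⟩

/-- For a virtual shelf `(S, ◁, f)` and `n = m+1 ≥ 2` strands,
`σ_i ↦ T_i`, `ζ_i ↦ Z_i^f` defines a monoid homomorphism `VB_n^+ → End(S^n)`. -/
theorem stmt6 {S : Type*} (op : S → S → S)
    (hsd : ∀ a b c : S, op (op a b) c = op (op a c) (op b c))
    (f : S ≃ S) (hf : ∀ a b : S, f (op a b) = op (f a) (f b))
    {m : ℕ} (hm : 1 ≤ m) :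
    ∃ ρ : PresentedMonoid (vbMonoidRels m) →* Function.End (Fin (m + 1) → S),
      ∀ i : Fin m,
        ρ (PresentedMonoid.of (vbMonoidRels m) (Sum.inl i)) = braidMap op i ∧
        ρ (PresentedMonoid.of (vbMonoidRels m) (Sum.inr i)) = vswapMap f i :=
  stmt6_general op hsd f hf
end

section
/- Let FS_ℤ be the free shelf on the generators {x_k : k ∈ ℤ}. The generator shift x_k ↦ x_{k+1} induces a well-defined shelf automorphism f of FS_ℤ, and the triple (FS_ℤ, f, x_0) is the free virtual shelf on one generator: for every shelf (T,◁') equipped with a shelf automorphism g and every element t ∈ T, there exists a unique shelf homomorphism φ : FS_ℤ → T (i.e. φ(a◁b) = φ(a)◁'φ(b)) such that φ(x_0) = t and φ ∘ f = g ∘ φ. -/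
universe u

def sdRel (α : Type*) : FreeMagma α → FreeMagma α → Prop := fun a b =>
  ∃ t u v : FreeMagma α, a = t * u * v ∧ b = (t * v) * (u * v)

abbrev FreeShelf (α : Type*) := (conGen (sdRel α)).Quotient

def FreeShelf.of {α : Type*} (x : α) : FreeShelf α := (FreeMagma.of x : FreeMagma α)

/-! `FreeShelf α` is free on `α`: a map `α → β` into any shelf lifts uniquely to a
multiplicative map, since self-distributivity is all the congruence imposes. Hence the shift
`k ↦ k + 1` of `ℤ` lifts to an automorphism `f`, and for a shelf automorphism `g` and `t : T`
the map `x_k ↦ gᵏ t` is the unique homomorphism with `x_0 ↦ t` intertwining `f` and `g`: any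
such `ψ` satisfies `ψ x_{k+1} = g (ψ x_k)`, which pins down `ψ x_k` for all `k ∈ ℤ`. -/

namespace FreeShelf

variable {α β γ : Type*}

theorem self_distrib (a b c : FreeShelf α) : a * b * c = a * c * (b * c) := by
  induction a using Con.induction_on
  induction b using Con.induction_on
  induction c using Con.induction_on
  exact (Con.eq _).2 (ConGen.Rel.of _ _ ⟨_, _, _, rfl, rfl⟩)

@[elab_as_elim]
theorem induction_on {p : FreeShelf α → Prop} (a : FreeShelf α) (of : ∀ x, p (of x))
    (mul : ∀ a b, p a → p b → p (a * b)) : p a := by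
  induction a using Con.induction_on with
  | H w =>
    induction w using FreeMagma.recOnMul with
    | ih1 x => exact of x
    | ih2 v w hv hw => exact mul _ _ hv hw

theorem ext_of_map_mul [Mul β] {φ ψ : FreeShelf α → β}
    (hφ : ∀ a b, φ (a * b) = φ a * φ b) (hψ : ∀ a b, ψ (a * b) = ψ a * ψ b)
    (h : ∀ x, φ (of x) = ψ (of x)) : φ = ψ :=
  funext fun a => induction_on a h fun a b ha hb => by rw [hφ, hψ, ha, hb]

section lift

variable [Mul β]

theorem conGen_le_ker_lift (hsd : ∀ a b c : β, a * b * c = a * c * (b * c)) (f : α → β) :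
    conGen (sdRel α) ≤ Con.ker (FreeMagma.lift f) :=
  Con.conGen_le.2 fun _ _ ⟨t, u, v, hl, hr⟩ => by
    simp only [Con.ker_rel, hl, hr, map_mul]
    exact hsd _ _ _

def lift (hsd : ∀ a b c : β, a * b * c = a * c * (b * c)) (f : α → β) :
    FreeShelf α →ₙ* β where
  toFun a := Con.liftOn a (FreeMagma.lift f) fun _ _ h => conGen_le_ker_lift hsd f h
  map_mul' a b := by
    induction a using Con.induction_on
    induction b using Con.induction_on
    exact map_mul (FreeMagma.lift f) _ _

@[simp]
theorem lift_of (hsd : ∀ a b c : β, a * b * c = a * c * (b * c)) (f : α → β) (x : α) :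
    lift hsd f (of x) = f x :=
  rfl

end lift

def mapEquiv (e : α ≃ γ) : FreeShelf α ≃* FreeShelf γ where
  toFun := lift self_distrib (of ∘ e)
  invFun := lift self_distrib (of ∘ e.symm)
  left_inv := congrFun <| ext_of_map_mul (by simp only [map_mul, implies_true])
    (fun _ _ => rfl) (by simp)
  right_inv := congrFun <| ext_of_map_mul (by simp only [map_mul, implies_true])
    (fun _ _ => rfl) (by simp)
  map_mul' := map_mul _

end FreeShelf

theorem Equiv.Perm.zpow_add_one_apply {T : Type*} (g : Perm T) (k : ℤ) (x : T) :
    (g ^ (k + 1)) x = g ((g ^ k) x) := by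
  rw [add_comm, zpow_one_add, mul_apply]

theorem Equiv.Perm.eq_zpow_apply_of_forall_succ {T : Type*} (g : Perm T) {u : ℤ → T}
    (h : ∀ k, u (k + 1) = g (u k)) (k : ℤ) : u k = (g ^ k) (u 0) := by
  induction k using Int.induction_on with
  | zero => rfl
  | succ n ih => rw [h, ih, zpow_add_one_apply]
  | pred n ih =>
    apply g.injective
    rw [← h, ← zpow_add_one_apply, sub_add_cancel, ih]

/-- The generator shift `x_k ↦ x_{k+1}` induces a shelf automorphism `f`
of the free shelf `FS_ℤ`, and `(FS_ℤ, f, x_0)` is the free virtual shelf on one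
generator: for every shelf `(T, ◁')` with a shelf automorphism `g` and every `t ∈ T`,
there is a unique shelf homomorphism `φ : FS_ℤ → T` with `φ(x_0) = t` and `φ∘f = g∘φ`. -/
theorem stmt7 :
    ∃ f : FreeShelf ℤ ≃ FreeShelf ℤ,
      (∀ a b : FreeShelf ℤ, f (a * b) = f a * f b) ∧
      (∀ k : ℤ, f (FreeShelf.of k) = FreeShelf.of (k + 1)) ∧
      ∀ (T : Type u) (op : T → T → T),
        (∀ a b c : T, op (op a b) c = op (op a c) (op b c)) →
        ∀ g : T ≃ T, (∀ a b : T, g (op a b) = op (g a) (g b)) →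
        ∀ t : T, ∃! φ : FreeShelf ℤ → T,
          (∀ a b : FreeShelf ℤ, φ (a * b) = op (φ a) (φ b)) ∧
          φ (FreeShelf.of 0) = t ∧ φ ∘ f = g ∘ φ := by
  let f := FreeShelf.mapEquiv (Equiv.addRight (1 : ℤ))
  refine ⟨f.toEquiv, map_mul f, fun _ => rfl, fun T op hop g hg t => ?_⟩
  let : Mul T := ⟨op⟩
  let φ := FreeShelf.lift hop fun k : ℤ => (g ^ k) t
  have φ_comm : φ ∘ f = g ∘ φ :=
    FreeShelf.ext_of_map_mul (fun a b => by simp only [Function.comp_apply, map_mul])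
      (fun a b => by simp only [Function.comp_apply, map_mul]; exact hg _ _)
      (fun k => Equiv.Perm.zpow_add_one_apply g k t)
  refine ⟨φ, ⟨map_mul φ, rfl, φ_comm⟩, fun ψ ⟨ψ_mul, ψ_zero, ψ_comm⟩ => ?_⟩
  have ψ_of (k : ℤ) : ψ (FreeShelf.of k) = (g ^ k) t :=
    ψ_zero ▸ Equiv.Perm.eq_zpow_apply_of_forall_succ g (u := fun k => ψ (FreeShelf.of k))
      (fun k => congrFun ψ_comm (FreeShelf.of k)) k
  exact FreeShelf.ext_of_map_mul ψ_mul (map_mul φ) ψ_of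
end

section
/- Let R be a commutative ring, V an R-module, [,] : V × V → V an R-bilinear map satisfying the Leibniz identity [v,[w,u]] = [[v,w],u] − [[v,u],w] for all v,w,u ∈ V, and e ∈ V an element with [v,e] = 0 and [e,v] = 0 for all v ∈ V (a Lie unit). Let σ : V ⊗_R V → V ⊗_R V be the R-linear map determined by σ(a ⊗ b) = b ⊗ a + e ⊗ [a,b]. Then σ satisfies the Yang–Baxter equation (σ ⊗ id) ∘ (id ⊗ σ) ∘ (σ ⊗ id) = (id ⊗ σ) ∘ (σ ⊗ id) ∘ (id ⊗ σ) on V ⊗ V ⊗ V, and σ is a linear automorphism of V ⊗ V, with inverse determined by σ^{−1}(a ⊗ b) = b ⊗ a − [b,a] ⊗ e. -/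
/-!
Both sides of the Yang–Baxter equation send `a ⊗ b ⊗ c` to `c ⊗ b ⊗ a` plus correction terms
built from `e`. Because `e` is a Lie unit, every correction in which `e` meets the bracket
vanishes; the surviving terms agree except for `e ⊗ e ⊗ [[a,b],c]` on the left against
`e ⊗ e ⊗ ([[a,c],b] + [a,[b,c]])` on the right, and these are equal by the Leibniz identity.
-/

open TensorProduct

namespace TensorProduct

variable {R V : Type*} [CommRing R] [AddCommGroup V] [Module R V]

def leibnizBraiding (br : V →ₗ[R] V →ₗ[R] V) (e : V) : V ⊗[R] V →ₗ[R] V ⊗[R] V :=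
  (TensorProduct.comm R V V).toLinearMap + TensorProduct.mk R V V e ∘ₗ lift br

@[simp]
theorem leibnizBraiding_tmul (br : V →ₗ[R] V →ₗ[R] V) (e a b : V) :
    leibnizBraiding br e (a ⊗ₜ b) = b ⊗ₜ a + e ⊗ₜ br a b :=
  rfl

def leibnizBraidingInv (br : V →ₗ[R] V →ₗ[R] V) (e : V) : V ⊗[R] V →ₗ[R] V ⊗[R] V :=
  (TensorProduct.comm R V V).toLinearMap - (TensorProduct.mk R V V).flip e ∘ₗ lift br.flip

@[simp]
theorem leibnizBraidingInv_tmul (br : V →ₗ[R] V →ₗ[R] V) (e a b : V) :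
    leibnizBraidingInv br e (a ⊗ₜ b) = b ⊗ₜ a - br b a ⊗ₜ e :=
  rfl

variable {br : V →ₗ[R] V →ₗ[R] V} {e : V}

theorem leibnizBraidingInv_comp_leibnizBraiding (he : ∀ v, br v e = 0) :
    leibnizBraidingInv br e ∘ₗ leibnizBraiding br e = LinearMap.id :=
  ext' fun a b => by simp [he]

theorem leibnizBraiding_comp_leibnizBraidingInv (he : ∀ v, br v e = 0) :
    leibnizBraiding br e ∘ₗ leibnizBraidingInv br e = LinearMap.id :=
  ext' fun a b => by simp [he]

def leibnizBraidingEquiv (he : ∀ v, br v e = 0) : V ⊗[R] V ≃ₗ[R] V ⊗[R] V :=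
  LinearEquiv.ofLinearMap (f := leibnizBraiding br e) (g := leibnizBraidingInv br e)
    (leibnizBraiding_comp_leibnizBraidingInv he) (leibnizBraidingInv_comp_leibnizBraiding he)

theorem leibnizBraiding_yangBaxter
    (hLei : ∀ v w u : V, br v (br w u) = br (br v w) u - br (br v u) w)
    (he₁ : ∀ v, br v e = 0) (he₂ : ∀ v, br e v = 0) :
    let σ₁ := (leibnizBraiding br e).rTensor V
    let σ₂ := (TensorProduct.assoc R V V V).symm.toLinearMap ∘ₗ
      (leibnizBraiding br e).lTensor V ∘ₗ (TensorProduct.assoc R V V V).toLinearMap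
    σ₁ ∘ₗ σ₂ ∘ₗ σ₁ = σ₂ ∘ₗ σ₁ ∘ₗ σ₂ := by
  intro σ₁ σ₂
  refine ext_threefold fun a b c => ?_
  have leibniz : br (br a b) c = br (br a c) b + br a (br b c) := by
    rw [hLei]; abel
  simp only [σ₁, σ₂, LinearMap.comp_apply, LinearEquiv.coe_coe, assoc_tmul, assoc_symm_tmul,
    LinearMap.rTensor_tmul, LinearMap.lTensor_tmul, leibnizBraiding_tmul, add_tmul, tmul_add,
    map_add, he₁, he₂, tmul_zero, add_zero, leibniz]
  abel

end TensorProduct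

/-- For a Leibniz bracket `[,]` on an `R`-module `V` with a Lie unit `e`,
the linear map `σ : V ⊗ V → V ⊗ V`, `a ⊗ b ↦ b ⊗ a + e ⊗ [a,b]`, satisfies the
Yang–Baxter equation, and it is a linear automorphism of `V ⊗ V`, with inverse
determined by `a ⊗ b ↦ b ⊗ a − [b,a] ⊗ e`. -/
theorem stmt15 {R : Type*} [CommRing R] {V : Type*} [AddCommGroup V] [Module R V]
    (br : V →ₗ[R] V →ₗ[R] V)
    (hLei : ∀ v w u : V, br v (br w u) = br (br v w) u - br (br v u) w)
    (e : V) (he₁ : ∀ v : V, br v e = 0) (he₂ : ∀ v : V, br e v = 0)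
    (σ : V ⊗[R] V →ₗ[R] V ⊗[R] V)
    (hσ : ∀ a b : V, σ (a ⊗ₜ[R] b) = b ⊗ₜ[R] a + e ⊗ₜ[R] (br a b)) :
    (let σ₁ : (V ⊗[R] V) ⊗[R] V →ₗ[R] (V ⊗[R] V) ⊗[R] V := LinearMap.rTensor V σ
     let σ₂ : (V ⊗[R] V) ⊗[R] V →ₗ[R] (V ⊗[R] V) ⊗[R] V :=
       (TensorProduct.assoc R V V V).symm.toLinearMap ∘ₗ LinearMap.lTensor V σ ∘ₗ
         (TensorProduct.assoc R V V V).toLinearMap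
     σ₁ ∘ₗ σ₂ ∘ₗ σ₁ = σ₂ ∘ₗ σ₁ ∘ₗ σ₂) ∧
    Function.Bijective σ ∧
    ∃ τ : V ⊗[R] V →ₗ[R] V ⊗[R] V,
      (∀ a b : V, τ (a ⊗ₜ[R] b) = b ⊗ₜ[R] a - (br b a) ⊗ₜ[R] e) ∧
      τ ∘ₗ σ = LinearMap.id ∧ σ ∘ₗ τ = LinearMap.id := by
  obtain rfl : σ = leibnizBraiding br e := ext' fun a b => hσ a b
  exact ⟨leibnizBraiding_yangBaxter hLei he₁ he₂, (leibnizBraidingEquiv he₁).bijective,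
    leibnizBraidingInv br e, leibnizBraidingInv_tmul br e,
    leibnizBraidingInv_comp_leibnizBraiding he₁, leibnizBraiding_comp_leibnizBraidingInv he₁⟩
end

section
/- Let R be a commutative ring, V an R-module, σ : V ⊗_R V → V ⊗_R V a linear map satisfying the Yang–Baxter equation, and f : V → V a linear automorphism with (f ⊗ f) ∘ σ = σ ∘ (f ⊗ f). Then: (1) σ'' := (f ⊗ f^{−1}) ∘ σ ∘ (f^{−1} ⊗ f) also satisfies the Yang–Baxter equation; (2) for every n ≥ 2, the automorphism F := f^0 ⊗ f^{−2} ⊗ f^{−4} ⊗ ⋯ ⊗ f^{−2(n−1)} of V^{⊗n} intertwines the two families of braid operators: F ∘ σ_i = σ''_i ∘ F for all 1 ≤ i ≤ n−1, where σ_i = id^{⊗(i−1)} ⊗ σ ⊗ id^{⊗(n−i−1)} and σ''_i = id^{⊗(i−1)} ⊗ σ'' ⊗ id^{⊗(n−i−1)}. In particular the representations of the braid group B_n on V^{⊗n} defined by σ and by σ'' are equivalent. -/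
/-!
Everything rests on one local identity: for `a = b + 2`,
`σ'' ∘ (f^a ⊗ f^b) = (f^a ⊗ f^b) ∘ σ`. Indeed `f^a ⊗ f^b = (f ⊗ f⁻¹) ∘ (f^(b+1) ⊗ f^(b+1))`,
the second factor commutes with `σ`, and `(f ⊗ f⁻¹)` conjugates `σ` into `σ''`.
Tensoring this identity with identities and with further powers of `f` shows that
`G = f^0 ⊗ f^(-2) ⊗ f^(-4)` conjugates both `σ₁, σ₂` into `σ''₁, σ''₂` on `V^{⊗3}`, so the braid
relation transfers from `σ` to `σ''`, and that `F` intertwines `σ_i` with `σ''_i` on `V^{⊗n}`.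
-/

open TensorProduct LinearMap

theorem LinearEquiv.commute_zpow_toLinearMap {R M : Type*} [Semiring R] [AddCommMonoid M]
    [Module R M] (e : M ≃ₗ[R] M) {T : Module.End R M} (h : Commute e.toLinearMap T) (k : ℤ) :
    Commute (e ^ k).toLinearMap T := by
  have := Commute.units_zpow_left
    (u := Units.map automorphismGroup.toLinearMapMonoidHom (toUnits e)) h k
  rwa [← map_zpow, ← map_zpow] at this

theorem SemiconjBy.braid {G : Type*} [Monoid G] {g a b a' b' : G} (hg : IsUnit g)
    (ha : SemiconjBy g a a') (hb : SemiconjBy g b b') (h : a * b * a = b * a * b) :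
    a' * b' * a' = b' * a' * b' := by
  rw [← hg.mul_left_inj, ← ((ha.mul_right hb).mul_right ha).eq, h,
    ((hb.mul_right ha).mul_right hb).eq]

namespace TensorProduct

variable {R : Type*} [CommSemiring R] {M N P : Type*} [AddCommMonoid M] [AddCommMonoid N]
  [AddCommMonoid P] [Module R M] [Module R N] [Module R P]

theorem semiconjBy_map_rTensor {g s s' : Module.End R M} (hs : SemiconjBy g s s')
    (h : Module.End R N) : SemiconjBy (map g h) (rTensor N s) (rTensor N s') := by
  simp only [SemiconjBy, Module.End.mul_eq_comp] at hs ⊢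
  rw [map_comp_rTensor, rTensor_comp_map, hs]

theorem semiconjBy_map_lTensor {h t t' : Module.End R N} (ht : SemiconjBy h t t')
    (g : Module.End R M) : SemiconjBy (map g h) (lTensor M t) (lTensor M t') := by
  simp only [SemiconjBy, Module.End.mul_eq_comp] at ht ⊢
  rw [map_comp_lTensor, lTensor_comp_map, ht]

theorem semiconjBy_map_map_assoc {g₁ : Module.End R M} {g₂ : Module.End R N}
    {g₃ : Module.End R P} {b b' : Module.End R (M ⊗[R] (N ⊗[R] P))}
    (h : SemiconjBy (map g₁ (map g₂ g₃)) b b') :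
    SemiconjBy (map (map g₁ g₂) g₃)
      ((TensorProduct.assoc R M N P).symm.toLinearMap ∘ₗ b ∘ₗ
        (TensorProduct.assoc R M N P).toLinearMap)
      ((TensorProduct.assoc R M N P).symm.toLinearMap ∘ₗ b' ∘ₗ
        (TensorProduct.assoc R M N P).toLinearMap) := by
  simp only [SemiconjBy, Module.End.mul_eq_comp] at h ⊢
  rw [← comp_assoc, map_map_comp_assoc_symm_eq, comp_assoc, ← comp_assoc _ b, h, comp_assoc,
    map_map_comp_assoc_eq]
  simp only [comp_assoc]

end TensorProduct

namespace YangBaxter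

variable {R : Type*} [CommSemiring R] {V : Type*} [AddCommMonoid V] [Module R V]

/-- The braid operator `σ₂` on `(V ⊗ V) ⊗ V`; `σ₁` is `rTensor V σ`. -/
def lTensorAssoc (σ : Module.End R (V ⊗[R] V)) : Module.End R ((V ⊗[R] V) ⊗[R] V) :=
  (TensorProduct.assoc R V V V).symm.toLinearMap ∘ₗ lTensor V σ ∘ₗ
    (TensorProduct.assoc R V V V).toLinearMap

def _root_.IsYangBaxter (σ : Module.End R (V ⊗[R] V)) : Prop :=
  rTensor V σ * lTensorAssoc σ * rTensor V σ = lTensorAssoc σ * rTensor V σ * lTensorAssoc σ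

theorem _root_.IsYangBaxter.of_semiconjBy {σ σ' : Module.End R (V ⊗[R] V)}
    (hσ : IsYangBaxter σ) (g₁ g₂ g₃ : V ≃ₗ[R] V)
    (h₁₂ : SemiconjBy (map g₁.toLinearMap g₂.toLinearMap) σ σ')
    (h₂₃ : SemiconjBy (map g₂.toLinearMap g₃.toLinearMap) σ σ') : IsYangBaxter σ' :=
  SemiconjBy.braid
    ((Module.End.isUnit_iff _).mpr
      (map_bijective (map_bijective g₁.bijective g₂.bijective) g₃.bijective))
    (semiconjBy_map_rTensor h₁₂ _) (semiconjBy_map_map_assoc (semiconjBy_map_lTensor h₂₃ _)) hσ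

def twist (f : V ≃ₗ[R] V) (σ : Module.End R (V ⊗[R] V)) : Module.End R (V ⊗[R] V) :=
  map f.toLinearMap f.symm.toLinearMap ∘ₗ σ ∘ₗ map f.symm.toLinearMap f.toLinearMap

theorem semiconjBy_map_twist (f : V ≃ₗ[R] V) (σ : Module.End R (V ⊗[R] V)) :
    SemiconjBy (map f.toLinearMap f.symm.toLinearMap) σ (twist f σ) := by
  have hinv : map f.symm.toLinearMap f.toLinearMap ∘ₗ map f.toLinearMap f.symm.toLinearMap =
      .id := by
    rw [← map_comp, f.symm_comp, f.comp_symm, map_id]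
  simp only [SemiconjBy, twist, Module.End.mul_eq_comp, comp_assoc, hinv, comp_id]

theorem semiconjBy_map_zpow_twist {f : V ≃ₗ[R] V} {σ : Module.End R (V ⊗[R] V)}
    (hf : Commute (map f.toLinearMap f.toLinearMap) σ) (a b : ℤ) (hab : a = b + 2) :
    SemiconjBy (map (f ^ a).toLinearMap (f ^ b).toLinearMap) σ (twist f σ) := by
  have hcomm : Commute (map (f ^ (b + 1)).toLinearMap (f ^ (b + 1)).toLinearMap) σ := by
    simpa only [congr_zpow, toLinearMap_congr] using
      (congr f f).commute_zpow_toLinearMap hf (b + 1)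
  have hsplit : map (f ^ a).toLinearMap (f ^ b).toLinearMap =
      map f.toLinearMap f.symm.toLinearMap *
        map (f ^ (b + 1)).toLinearMap (f ^ (b + 1)).toLinearMap := by
    have h₁ : f ^ a = f * f ^ (b + 1) := by rw [← zpow_one_add, hab]; ring_nf
    have h₂ : f ^ b = f⁻¹ * f ^ (b + 1) := by rw [← zpow_neg_one, ← zpow_add]; ring_nf
    rw [h₁, h₂, f.coe_toLinearMap_mul, LinearEquiv.coe_toLinearMap_mul, TensorProduct.map_mul]
    rfl
  rw [hsplit]
  exact (semiconjBy_map_twist f σ).mul_left hcomm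

end YangBaxter

/-- Let `σ` be a Yang–Baxter operator on an `R`-module `V` and `f` a linear
automorphism of `V` commuting with `σ` (i.e. `(f ⊗ f) ∘ σ = σ ∘ (f ⊗ f)`). Then
(1) `σ'' = (f ⊗ f⁻¹) ∘ σ ∘ (f⁻¹ ⊗ f)` also satisfies the Yang–Baxter equation, and
(2) for every `n = p + q + 2 ≥ 2` and every position `i = p + 1` (`1 ≤ i ≤ n−1`), the
automorphism `F = f^0 ⊗ f^{−2} ⊗ ⋯ ⊗ f^{−2(n−1)}` of
`V^{⊗n} = (V^{⊗p}) ⊗ ((V ⊗ V) ⊗ V^{⊗q})` is bijective and intertwines the braid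
operators: `F ∘ σ_i = σ''_i ∘ F`. -/
theorem stmt17 {R : Type*} [CommRing R] {V : Type*} [AddCommGroup V] [Module R V]
    (σ : V ⊗[R] V →ₗ[R] V ⊗[R] V)
    (hYB :
      (LinearMap.rTensor V σ) ∘ₗ
          ((TensorProduct.assoc R V V V).symm.toLinearMap ∘ₗ LinearMap.lTensor V σ ∘ₗ
            (TensorProduct.assoc R V V V).toLinearMap) ∘ₗ (LinearMap.rTensor V σ) =
        ((TensorProduct.assoc R V V V).symm.toLinearMap ∘ₗ LinearMap.lTensor V σ ∘ₗ
            (TensorProduct.assoc R V V V).toLinearMap) ∘ₗ (LinearMap.rTensor V σ) ∘ₗ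
          ((TensorProduct.assoc R V V V).symm.toLinearMap ∘ₗ LinearMap.lTensor V σ ∘ₗ
            (TensorProduct.assoc R V V V).toLinearMap))
    (f : V ≃ₗ[R] V)
    (hf : (TensorProduct.map f.toLinearMap f.toLinearMap) ∘ₗ σ =
      σ ∘ₗ (TensorProduct.map f.toLinearMap f.toLinearMap)) :
    (let σ'' : V ⊗[R] V →ₗ[R] V ⊗[R] V :=
      (TensorProduct.map f.toLinearMap f.symm.toLinearMap) ∘ₗ σ ∘ₗ
        (TensorProduct.map f.symm.toLinearMap f.toLinearMap)
     (LinearMap.rTensor V σ'') ∘ₗ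
        ((TensorProduct.assoc R V V V).symm.toLinearMap ∘ₗ LinearMap.lTensor V σ'' ∘ₗ
          (TensorProduct.assoc R V V V).toLinearMap) ∘ₗ (LinearMap.rTensor V σ'') =
      ((TensorProduct.assoc R V V V).symm.toLinearMap ∘ₗ LinearMap.lTensor V σ'' ∘ₗ
          (TensorProduct.assoc R V V V).toLinearMap) ∘ₗ (LinearMap.rTensor V σ'') ∘ₗ
        ((TensorProduct.assoc R V V V).symm.toLinearMap ∘ₗ LinearMap.lTensor V σ'' ∘ₗ
          (TensorProduct.assoc R V V V).toLinearMap)) ∧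
    (∀ p q : ℕ,
      let σ'' : V ⊗[R] V →ₗ[R] V ⊗[R] V :=
        (TensorProduct.map f.toLinearMap f.symm.toLinearMap) ∘ₗ σ ∘ₗ
          (TensorProduct.map f.symm.toLinearMap f.toLinearMap)
      -- `F = f^0 ⊗ f^{−2} ⊗ ⋯ ⊗ f^{−2(n−1)}`, on `V^{⊗n}` grouped as
      -- `(V^{⊗p}) ⊗ ((V ⊗ V) ⊗ (V^{⊗q}))`, so that positions `i = p+1, i+1 = p+2`
      -- carry `f^{−2p}` and `f^{−2(p+1)}`:
      let F : ((⨂[R]^p V) ⊗[R] ((V ⊗[R] V) ⊗[R] (⨂[R]^q V))) →ₗ[R]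
          ((⨂[R]^p V) ⊗[R] ((V ⊗[R] V) ⊗[R] (⨂[R]^q V))) :=
        TensorProduct.map
          (PiTensorProduct.map fun j : Fin p => (f ^ (-(2 * (j : ℤ)))).toLinearMap)
          (TensorProduct.map
            (TensorProduct.map (f ^ (-(2 * (p : ℤ)))).toLinearMap
              (f ^ (-(2 * ((p : ℤ) + 1)))).toLinearMap)
            (PiTensorProduct.map fun j : Fin q =>
              (f ^ (-(2 * ((p : ℤ) + 2 + (j : ℤ))))).toLinearMap))
      Function.Bijective F ∧
        F ∘ₗ LinearMap.lTensor (⨂[R]^p V) (LinearMap.rTensor (⨂[R]^q V) σ) =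
          LinearMap.lTensor (⨂[R]^p V) (LinearMap.rTensor (⨂[R]^q V) σ'') ∘ₗ F) := by
  have hσ'' : ∀ a b : ℤ, a = b + 2 →
      SemiconjBy (map (f ^ a).toLinearMap (f ^ b).toLinearMap) σ (YangBaxter.twist f σ) :=
    YangBaxter.semiconjBy_map_zpow_twist hf
  -- `∘ₗ` is multiplication in `Module.End`, so up to unfolding `hYB` is `IsYangBaxter σ`, the
  -- first goal is `IsYangBaxter (twist f σ)` and the last one is a `SemiconjBy` statement.
  refine ⟨?_, fun p q => ⟨?_, ?_⟩⟩ <;> intros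
  · exact IsYangBaxter.of_semiconjBy (σ := σ) hYB (f ^ (0 : ℤ)) (f ^ (-2 : ℤ)) (f ^ (-4 : ℤ))
      (hσ'' _ _ (by norm_num)) (hσ'' _ _ (by norm_num))
  · exact (TensorProduct.congr (PiTensorProduct.congr fun _ => _)
      (TensorProduct.congr (TensorProduct.congr _ _) (PiTensorProduct.congr fun _ => _))).bijective
  · exact semiconjBy_map_lTensor (semiconjBy_map_rTensor (hσ'' _ _ (by ring)) _) _
end
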